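/- When the last argument of the 3-ary star product is the coordinate function x_k: f ⋆^g x_k = x_k f g + (iθ_{σ(k)}/2) ∂_{σ(k)}f · ∂_{σ²(k)}g − (iθ_{σ²(k)}/2) ∂_{σ²(k)}f · ∂_{σ(k)}g, for all smooth (or polynomial) functions f, g on ℝ³ and k ∈ {1,2,3}. -/
import Mathlib


noncomputable section

/-- The cyclic permutation σ of {1,2,3} (indexed by `Fin 3`): σ(k) = k+1 mod 3. -/
def sig : Fin 3 → Fin 3 := fun k => k + 1

/-- Partial derivative ∂_k of a function on ℝ³. -/
def pd (k : Fin 3) (f : (Fin 3 → ℝ) → ℂ) : (Fin 3 → ℝ) → ℂ :=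
  fun x => deriv (fun t : ℝ => f (Function.update x k t)) (x k)

/-- Iterated partial derivatives along a list of indices. -/
def pdL (l : List (Fin 3)) (f : (Fin 3 → ℝ) → ℂ) : (Fin 3 → ℝ) → ℂ := l.foldr pd f

/-- The 3-ary star product (f ⋆^g h) = m[exp(𝒫)(f⊗g⊗h)], where
𝒫 = ∑_k (iθ_k/2)(∂_k ⊗ ∂_{σ(k)} ⊗ ∂_{σ²(k)} − ∂_k ⊗ ∂_{σ²(k)} ⊗ ∂_{σ(k)}),
written out by expanding the exponential series: the n-th order term is a sum
over all words `w` of length n in the six summands of 𝒫 (indexed by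
`Fin 3 × Bool`, the Boolean recording the sign), divided by n!. -/
def star3 (θ : Fin 3 → ℝ) (f g h : (Fin 3 → ℝ) → ℂ) : (Fin 3 → ℝ) → ℂ :=
  fun x => ∑' n : ℕ, (1 / n.factorial : ℂ) *
    ∑ w : Fin n → Fin 3 × Bool,
      (∏ i, (if (w i).2 then 1 else -1) * (Complex.I * (θ (w i).1) / 2)) *
      (pdL (List.ofFn fun i => (w i).1) f x) *
      (pdL (List.ofFn fun i => if (w i).2 then sig (w i).1 else sig (sig (w i).1)) g x) *
      (pdL (List.ofFn fun i => if (w i).2 then sig (sig (w i).1) else sig (w i).1) h x)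

/-- The k-th coordinate function on ℝ³, viewed as complex valued. -/
def X (k : Fin 3) : (Fin 3 → ℝ) → ℂ := fun x => (x k : ℂ)


lemma pd_const (j : Fin 3) (c : ℂ) : pd j (fun _ => c) = fun _ => 0 := by
  funext x; simp [pd]

lemma pd_X (j k : Fin 3) : pd j (X k) = fun _ => (if j = k then 1 else 0 : ℂ) := by
  funext x
  simp only [pd, X, Function.update_apply]
  rcases eq_or_ne j k with h | h
  · subst h; simp only [if_pos rfl]
    exact ((hasDerivAt_id _).ofReal_comp).deriv
  · rw [if_neg h]
    have : (fun t : ℝ => ((if k = j then t else x k : ℝ) : ℂ)) = fun _ => ((x k : ℝ) : ℂ) := by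
      funext t; rw [if_neg (Ne.symm h)]
    rw [this, deriv_const]

lemma pdL_X_zero (k : Fin 3) (l : List (Fin 3)) (h : 2 ≤ l.length) :
    pdL l (X k) = fun _ => 0 := by
  match l with
  | a :: b :: rest =>
    induction rest generalizing a b with
    | nil =>
      show pd a (pd b (X k)) = _
      rw [pd_X, pd_const]
    | cons c rest ih =>
      show pd a (pdL (b :: c :: rest) (X k)) = _
      rw [ih b c (by simp), pd_const]

/-- truncation when the last argument is a coordinate function:
f ⋆^g x_k = x_k f g + (iθ_{σ(k)}/2)∂_{σ(k)}f ∂_{σ²(k)}g − (iθ_{σ²(k)}/2)∂_{σ²(k)}f ∂_{σ(k)}g. -/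
theorem star3_coord_last (θ : Fin 3 → ℝ) (k : Fin 3) (f g : (Fin 3 → ℝ) → ℂ)
    (hf : ContDiff ℝ (⊤ : ℕ∞) f) (hg : ContDiff ℝ (⊤ : ℕ∞) g) :
    ∀ x, star3 θ f g (X k) x =
      X k x * f x * g x
        + Complex.I * (θ (sig k)) / 2 * (pd (sig k) f x * pd (sig (sig k)) g x)
        - Complex.I * (θ (sig (sig k))) / 2 * (pd (sig (sig k)) f x * pd (sig k) g x) := by
  intro x
  unfold star3
  rw [tsum_eq_sum (s := ({0, 1} : Finset ℕ)) ?_]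
  · rw [Finset.sum_insert (by decide), Finset.sum_singleton]
    have h0 : (1 / (Nat.factorial 0) : ℂ) *
        ∑ w : Fin 0 → Fin 3 × Bool,
          (∏ i, (if (w i).2 then 1 else -1) * (Complex.I * (θ (w i).1) / 2)) *
          (pdL (List.ofFn fun i => (w i).1) f x) *
          (pdL (List.ofFn fun i => if (w i).2 then sig (w i).1 else sig (sig (w i).1)) g x) *
          (pdL (List.ofFn fun i => if (w i).2 then sig (sig (w i).1) else sig (w i).1) (X k) x)
        = X k x * f x * g x := by
      simp [pdL, X]; ring
    rw [h0]
    have h1 : ∀ (F : (Fin 1 → Fin 3 × Bool) → ℂ),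
        ∑ w : Fin 1 → Fin 3 × Bool, F w = ∑ a : Fin 3 × Bool, F (fun _ => a) := by
      intro F
      exact ((Equiv.funUnique (Fin 1) (Fin 3 × Bool)).symm.sum_comp F).symm
    rw [h1]
    rw [Fintype.sum_prod_type]
    rw [Fin.sum_univ_three]
    simp only [Fintype.sum_bool, if_true, if_false, Fin.prod_univ_one,
      List.ofFn_succ, List.ofFn_zero, pdL, List.foldr, pd_X]
    fin_cases k <;>
      simp [sig, Fin.ext_iff, Nat.factorial] <;> ring
  · intro n hn
    have hn2 : 2 ≤ n := by
      simp only [Finset.mem_insert, Finset.mem_singleton] at hn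
      omega
    have : ∀ w : Fin n → Fin 3 × Bool,
        pdL (List.ofFn fun i => if (w i).2 then sig (sig (w i).1) else sig (w i).1) (X k) x = 0 := by
      intro w
      rw [pdL_X_zero k _ (by simpa using hn2)]
    rw [Finset.sum_congr rfl fun w _ => by rw [this w, mul_zero], Finset.sum_const_zero, mul_zero]
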